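/- Let $\lambda_1, \lambda_2, \lambda_3 > 0$, $T > 0$, and let $V_1, V_2 \in C^1([\rho, \rho+\tau])$ with $V_1(\rho) = V_2(\rho)$ satisfy $\lambda_1 V_i'(t) + \lambda_2 V_i(t) + \lambda_3 \int_\rho^t V_i(r)\,dr = G_i(t)$ where $G_1, G_2$ are continuous and $|G_1(t) - G_2(t)| \le M$ for all $t \in [\rho, \rho+\tau]$. Then $\sup_{t \in [\rho, \rho+\tau]} |V_1(t) - V_2(t)| \le M / \sqrt{\lambda_1 \lambda_2 / \tau} = M \sqrt{\tau / (\lambda_1 \lambda_2)}$. -/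

import Mathlib

open Set intervalIntegral

/-- Contraction estimate for the integro-differential equation
`λ₁ V' + λ₂ V + λ₃ ∫_ρ^t V = G`: if two `C¹` solutions share the initial value and the
right-hand sides differ by at most `M` in sup norm, then
`sup |V₁ - V₂| ≤ M √(τ/(λ₁λ₂))` on `[ρ, ρ+τ]`. -/
theorem ode_contraction_estimate
    (lam1 lam2 lam3 ρ τ M : ℝ)
    (hlam1 : 0 < lam1) (hlam2 : 0 < lam2) (hlam3 : 0 < lam3)
    (hρ : 0 ≤ ρ) (hτ : 0 < τ) (hM : 0 ≤ M)
    (V₁ V₂ D₁ D₂ G₁ G₂ : ℝ → ℝ)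
    (hd₁ : ∀ t ∈ Icc ρ (ρ + τ), HasDerivAt V₁ (D₁ t) t)
    (hd₂ : ∀ t ∈ Icc ρ (ρ + τ), HasDerivAt V₂ (D₂ t) t)
    (hD₁ : ContinuousOn D₁ (Icc ρ (ρ + τ)))
    (hD₂ : ContinuousOn D₂ (Icc ρ (ρ + τ)))
    (hG₁ : ContinuousOn G₁ (Icc ρ (ρ + τ)))
    (hG₂ : ContinuousOn G₂ (Icc ρ (ρ + τ)))
    (heq₁ : ∀ t ∈ Icc ρ (ρ + τ),
      lam1 * D₁ t + lam2 * V₁ t + lam3 * ∫ r in ρ..t, V₁ r = G₁ t)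
    (heq₂ : ∀ t ∈ Icc ρ (ρ + τ),
      lam1 * D₂ t + lam2 * V₂ t + lam3 * ∫ r in ρ..t, V₂ r = G₂ t)
    (hGdiff : ∀ t ∈ Icc ρ (ρ + τ), |G₁ t - G₂ t| ≤ M)
    (hinit : V₁ ρ = V₂ ρ) :
    ∀ t ∈ Icc ρ (ρ + τ), |V₁ t - V₂ t| ≤ M * Real.sqrt (τ / (lam1 * lam2)) := by
  set T := ρ + τ with hT
  set W : ℝ → ℝ := fun s => V₁ s - V₂ s with hWdef
  set g : ℝ → ℝ := fun s => G₁ s - G₂ s with hgdef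
  have hWc : ContinuousOn W (Icc ρ T) := fun s hs =>
    (((hd₁ s hs).sub (hd₂ s hs)).continuousAt).continuousWithinAt
  have hV₁c : ContinuousOn V₁ (Icc ρ T) := fun s hs =>
    ((hd₁ s hs).continuousAt).continuousWithinAt
  have hV₂c : ContinuousOn V₂ (Icc ρ T) := fun s hs =>
    ((hd₂ s hs).continuousAt).continuousWithinAt
  have hgc : ContinuousOn g (Icc ρ T) := hG₁.sub hG₂
  have hW2c : ContinuousOn (fun s => (W s)^2) (Icc ρ T) := hWc.pow 2
  have hgWc : ContinuousOn (fun s => g s * W s) (Icc ρ T) := hgc.mul hWc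
  intro t ht
  obtain ⟨htρ, htT⟩ := ht
  have hsub : Icc ρ t ⊆ Icc ρ T := Icc_subset_Icc le_rfl htT
  have huIcc : uIcc ρ t = Icc ρ t := uIcc_of_le htρ
  have hint : ∀ (f : ℝ → ℝ), ContinuousOn f (Icc ρ T) → ∀ s ∈ Icc ρ t,
      IntervalIntegrable f MeasureTheory.volume ρ s := by
    intro f hf s hs
    apply (hf.mono ?_).intervalIntegrable
    rw [uIcc_of_le hs.1]
    exact Icc_subset_Icc le_rfl (hs.2.trans htT)
  set I : ℝ → ℝ := fun s => ∫ r in ρ..s, W r with hIdef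
  set Φ : ℝ → ℝ := fun s => lam1 * (W s)^2 / 2 + lam2 * (∫ r in ρ..s, (W r)^2)
      + lam3 * (I s)^2 / 2 - ∫ r in ρ..s, g r * W r with hΦdef
  have hΦcont : ContinuousOn Φ (Icc ρ t) := by
    have h1 : ContinuousOn (fun s => ∫ r in ρ..s, (W r)^2) (Icc ρ t) := by
      rw [← huIcc]
      exact intervalIntegral.continuousOn_primitive_interval'
        (hint _ hW2c t ⟨htρ, le_rfl⟩) (by rw [huIcc]; exact ⟨le_rfl, htρ⟩)
    have h2 : ContinuousOn I (Icc ρ t) := by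
      rw [← huIcc]
      exact intervalIntegral.continuousOn_primitive_interval'
        (hint _ hWc t ⟨htρ, le_rfl⟩) (by rw [huIcc]; exact ⟨le_rfl, htρ⟩)
    have h3 : ContinuousOn (fun s => ∫ r in ρ..s, g r * W r) (Icc ρ t) := by
      rw [← huIcc]
      exact intervalIntegral.continuousOn_primitive_interval'
        (hint _ hgWc t ⟨htρ, le_rfl⟩) (by rw [huIcc]; exact ⟨le_rfl, htρ⟩)
    exact (((continuousOn_const.mul ((hWc.mono hsub).pow 2)).div_const 2).add
      (continuousOn_const.mul h1)).add
      ((continuousOn_const.mul (h2.pow 2)).div_const 2) |>.sub h3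
  have hΦderiv : ∀ s ∈ Ico ρ t, HasDerivWithinAt Φ 0 (Ici s) s := by
    intro s hs
    have hsT : s < T := lt_of_lt_of_le hs.2 htT
    have hsIcc : s ∈ Icc ρ T := ⟨hs.1, hsT.le⟩
    have hst : s ∈ Icc ρ t := ⟨hs.1, hs.2.le⟩
    have hmem : Icc ρ T ∈ nhdsWithin s (Ioi s) :=
      Filter.mem_of_superset (Ioc_mem_nhdsGT_of_mem ⟨le_rfl, hsT⟩)
        (fun x hx => ⟨hs.1.trans hx.1.le, hx.2⟩)
    have hmeas : ∀ (f : ℝ → ℝ), ContinuousOn f (Icc ρ T) →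
        StronglyMeasurableAtFilter f (nhdsWithin s (Ioi s)) :=
      fun f hf => ⟨Icc ρ T, hmem, hf.aestronglyMeasurable measurableSet_Icc⟩
    have hcw : ∀ (f : ℝ → ℝ), ContinuousOn f (Icc ρ T) → ContinuousWithinAt f (Ioi s) s :=
      fun f hf => (hf.continuousWithinAt hsIcc).mono_of_mem_nhdsWithin hmem
    have hDW : HasDerivAt W (D₁ s - D₂ s) s := (hd₁ s hsIcc).sub (hd₂ s hsIcc)
    have h1 : HasDerivWithinAt (fun u => ∫ r in ρ..u, (W r)^2) ((W s)^2) (Ici s) s :=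
      intervalIntegral.integral_hasDerivWithinAt_right (hint _ hW2c s hst)
        (hmeas _ hW2c) (hcw _ hW2c)
    have h2 : HasDerivWithinAt I (W s) (Ici s) s :=
      intervalIntegral.integral_hasDerivWithinAt_right (hint _ hWc s hst)
        (hmeas _ hWc) (hcw _ hWc)
    have h3 : HasDerivWithinAt (fun u => ∫ r in ρ..u, g r * W r) (g s * W s) (Ici s) s :=
      intervalIntegral.integral_hasDerivWithinAt_right (hint _ hgWc s hst)
        (hmeas _ hgWc) (hcw _ hgWc)
    have hWsq : HasDerivWithinAt (fun u => (W u)^2) (2 * W s * (D₁ s - D₂ s)) (Ici s) s := by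
      have := (hDW.hasDerivWithinAt (s := Ici s)).fun_pow 2
      refine this.congr_deriv ?_
      push_cast
      ring
    have hΦ' : HasDerivWithinAt Φ
        (lam1 * (2 * W s * (D₁ s - D₂ s)) / 2 + lam2 * (W s)^2
          + lam3 * (2 * I s * W s) / 2 - g s * W s) (Ici s) s := by
      apply HasDerivWithinAt.sub _ h3
      apply HasDerivWithinAt.add
      apply HasDerivWithinAt.add
      · exact (hWsq.const_mul lam1).div_const 2
      · exact h1.const_mul lam2
      · have h4 := ((h2.fun_pow 2).const_mul lam3).div_const 2
        refine h4.congr_deriv ?_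
        push_cast
        ring
    have hIeq : I s = (∫ r in ρ..s, V₁ r) - ∫ r in ρ..s, V₂ r :=
      intervalIntegral.integral_sub (hint _ hV₁c s hst) (hint _ hV₂c s hst)
    have hrel : lam1 * (D₁ s - D₂ s) + lam2 * W s + lam3 * I s = g s := by
      have e1 := heq₁ s hsIcc
      have e2 := heq₂ s hsIcc
      rw [hIeq]
      simp only [hWdef, hgdef]
      linarith
    have hzero : lam1 * (2 * W s * (D₁ s - D₂ s)) / 2 + lam2 * (W s)^2
          + lam3 * (2 * I s * W s) / 2 - g s * W s = 0 := by
      linear_combination (W s) * hrel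
    exact hzero ▸ hΦ'
  have hΦρ : Φ ρ = 0 := by
    simp [hΦdef, hIdef, hWdef, intervalIntegral.integral_same, hinit]
  have hΦt : Φ t = 0 :=
    (constant_of_has_deriv_right_zero hΦcont hΦderiv t ⟨htρ, le_rfl⟩).trans hΦρ
  -- pointwise bound
  have hIbound : (∫ r in ρ..t, (g r * W r - lam2 * (W r)^2)) ≤ (t - ρ) * (M^2/(4*lam2)) := by
    have hmono := intervalIntegral.integral_mono_on htρ
      ((hint _ hgWc t ⟨htρ, le_rfl⟩).sub ((hint _ hW2c t ⟨htρ, le_rfl⟩).const_mul lam2))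
      (_root_.intervalIntegrable_const (c := M^2/(4*lam2)))
      (fun r hr => by
        have h1 : |g r| ≤ M := hGdiff r (hsub hr)
        have h2 : g r * W r ≤ M * |W r| := by
          calc g r * W r ≤ |g r * W r| := le_abs_self _
            _ = |g r| * |W r| := abs_mul _ _
            _ ≤ M * |W r| := mul_le_mul_of_nonneg_right h1 (abs_nonneg _)
        have h3' : (0:ℝ) ≤ 4*lam2^2*(W r)^2 - 4*lam2*M*|W r| + M^2 := by
          have he : 4*lam2^2*(W r)^2 - 4*lam2*M*|W r| + M^2 = (2*lam2*|W r|-M)^2 := by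
            rw [← sq_abs (W r)]; ring
          rw [he]; exact sq_nonneg _
        rw [le_div_iff₀ (by positivity : (0:ℝ) < 4*lam2)]
        nlinarith [mul_le_mul_of_nonneg_left h2 (by positivity : (0:ℝ) ≤ 4*lam2), h3'])
    calc (∫ r in ρ..t, (g r * W r - lam2 * (W r)^2))
        ≤ ∫ _r in ρ..t, (M^2/(4*lam2)) := hmono
      _ = (t - ρ) * (M^2/(4*lam2)) := by rw [intervalIntegral.integral_const, smul_eq_mul]
  have hsplit : (∫ r in ρ..t, (g r * W r - lam2 * (W r)^2))
      = (∫ r in ρ..t, g r * W r) - lam2 * ∫ r in ρ..t, (W r)^2 := by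
    rw [intervalIntegral.integral_sub (hint _ hgWc t ⟨htρ, le_rfl⟩)
      ((hint _ hW2c t ⟨htρ, le_rfl⟩).const_mul lam2), intervalIntegral.integral_const_mul]
  have hkey : lam1 * (W t)^2 / 2 ≤ τ * (M^2/(4*lam2)) := by
    have hWt2 : lam1 * (W t)^2/2 = ((∫ r in ρ..t, g r * W r)
        - lam2 * (∫ r in ρ..t, (W r)^2)) - lam3 * (I t)^2/2 := by
      simp only [hΦdef] at hΦt
      linarith
    have hItnn : (0:ℝ) ≤ lam3 * (I t)^2/2 := by positivity
    have hcnn : (0:ℝ) ≤ M^2/(4*lam2) := by positivity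
    have htle : t - ρ ≤ τ := by simp only [hT] at htT; linarith
    calc lam1 * (W t)^2/2 ≤ (∫ r in ρ..t, g r * W r) - lam2 * ∫ r in ρ..t, (W r)^2 := by
          rw [hWt2]; linarith
      _ = ∫ r in ρ..t, (g r * W r - lam2 * (W r)^2) := hsplit.symm
      _ ≤ (t - ρ) * (M^2/(4*lam2)) := hIbound
      _ ≤ τ * (M^2/(4*lam2)) := mul_le_mul_of_nonneg_right htle hcnn
  have hsq : (W t)^2 ≤ M^2 * (τ / (lam1 * lam2)) := by
    rw [mul_div_assoc']
    rw [le_div_iff₀ (mul_pos hlam1 hlam2)]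
    have h6 : (0:ℝ) < 4*lam2 := by positivity
    have h7 : lam1 * (W t)^2 / 2 ≤ τ * M^2 / (4*lam2) := by
      rw [show τ*M^2/(4*lam2) = τ*(M^2/(4*lam2)) from by ring]; exact hkey
    have h8 := (div_le_div_iff₀ (by norm_num : (0:ℝ)<2) h6).mp h7
    nlinarith [h8, mul_nonneg hτ.le (sq_nonneg M)]
  calc |V₁ t - V₂ t| = Real.sqrt ((W t)^2) := (Real.sqrt_sq_eq_abs _).symm
    _ ≤ Real.sqrt (M^2 * (τ / (lam1 * lam2))) := Real.sqrt_le_sqrt hsq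
    _ = M * Real.sqrt (τ / (lam1 * lam2)) := by
        rw [Real.sqrt_mul (sq_nonneg M), Real.sqrt_sq hM]
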